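/- Let G = ((X,Y),E) be a connected split graph with stretch index σ(G) = 2 and even maximum degree Δ(G), and let v be a vertex with deg(v) = Δ(G). If the subgraph of G induced by the closed neighborhood N[v] is overfull, then v has no pendant neighbor, i.e., no vertex of degree 1 is adjacent to v. -/

import Mathlib

open SimpleGraph Set

variable {V : Type*}

/-- The degree of a vertex `v` in `G` (as the cardinality of its neighbor set). -/
noncomputable def vdeg (G : SimpleGraph V) (v : V) : ℕ := (G.neighborSet v).ncard

/-- The maximum degree `Δ(G)` of `G`. -/
noncomputable def maxDeg (G : SimpleGraph V) : ℕ :=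
  sSup (Set.range fun v => vdeg G v)

/-- The number of edges `|E(G)|` of `G`. -/
noncomputable def edgeCount (G : SimpleGraph V) : ℕ := G.edgeSet.ncard

/-- A graph `G` on `n` vertices is overfull if `|E(G)| > Δ(G) * ⌊n/2⌋`. -/
def IsOverfull (G : SimpleGraph V) : Prop :=
  edgeCount G > maxDeg G * (Nat.card V / 2)

/-- `G` is subgraph-overfull if it has a subgraph `H` with `Δ(H) = Δ(G)` that is overfull. -/
def IsSubgraphOverfull (G : SimpleGraph V) : Prop :=
  ∃ (s : Set V) (H : SimpleGraph s),
    (∀ u v : s, H.Adj u v → G.Adj u.1 v.1) ∧ maxDeg H = maxDeg G ∧ IsOverfull H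

/-- The closed neighborhood `N[v] = N(v) ∪ {v}` of a vertex `v`. -/
def closedNbhd (G : SimpleGraph V) (v : V) : Set V := insert v (G.neighborSet v)

/-- `G` is neighborhood-overfull if some vertex `v` of maximum degree is such that the
subgraph induced by its closed neighborhood `N[v]` is overfull. -/
def IsNbhdOverfull (G : SimpleGraph V) : Prop :=
  ∃ v, vdeg G v = maxDeg G ∧ IsOverfull (G.induce (closedNbhd G v))

/-- A proper edge coloring of `G` with `n` colors: edges sharing a vertex get distinct colors. -/
def EdgeColorable (G : SimpleGraph V) (n : ℕ) : Prop :=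
  ∃ c : G.edgeSet → Fin n, ∀ e f : G.edgeSet,
    e ≠ f → (∃ v, v ∈ (e : Sym2 V) ∧ v ∈ (f : Sym2 V)) → c e ≠ c f

/-- The chromatic index `χ'(G)`. -/
noncomputable def chromIndex (G : SimpleGraph V) : ℕ :=
  sInf {n | EdgeColorable G n}

/-- A proper total coloring of `G` with `n` colors: adjacent vertices get distinct colors,
edges sharing a vertex get distinct colors, and each vertex gets a color distinct from all
its incident edges. -/
def TotalColorable (G : SimpleGraph V) (n : ℕ) : Prop :=
  ∃ (cv : V → Fin n) (ce : G.edgeSet → Fin n),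
    (∀ u v, G.Adj u v → cv u ≠ cv v) ∧
    (∀ e f : G.edgeSet, e ≠ f → (∃ v, v ∈ (e : Sym2 V) ∧ v ∈ (f : Sym2 V)) → ce e ≠ ce f) ∧
    (∀ (v : V) (e : G.edgeSet), v ∈ (e : Sym2 V) → cv v ≠ ce e)

/-- The total chromatic number `χ''(G)`. -/
noncomputable def totalChrom (G : SimpleGraph V) : ℕ :=
  sInf {n | TotalColorable G n}

/-- `T` is a tree `t`-spanner of `G`: a spanning tree of `G` in which any two vertices
adjacent in `G` are at distance at most `t`. -/
def IsTreeSpanner (G T : SimpleGraph V) (t : ℕ) : Prop :=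
  T ≤ G ∧ T.IsTree ∧ ∀ u v, G.Adj u v → T.dist u v ≤ t

/-- The stretch index `σ(G)`: the least `t ≥ 1` such that `G` admits a tree `t`-spanner. -/
noncomputable def stretchIndex (G : SimpleGraph V) : ℕ :=
  sInf {t | 1 ≤ t ∧ ∃ T, IsTreeSpanner G T t}

/-- `(X, Y)` is a split partition of `G`: `X` is a clique, `Y` is an independent set,
and they partition the vertex set. -/
def IsSplitPartition (G : SimpleGraph V) (X Y : Set V) : Prop :=
  X ∪ Y = Set.univ ∧ Disjoint X Y ∧ G.IsClique X ∧ ∀ u ∈ Y, ∀ v ∈ Y, ¬ G.Adj u v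

/-- `G` is a split graph. -/
def IsSplitGraph (G : SimpleGraph V) : Prop := ∃ X Y, IsSplitPartition G X Y

/-- `X` is a maximal clique of `G`. -/
def IsMaximalClique (G : SimpleGraph V) (X : Set V) : Prop :=
  G.IsClique X ∧ ∀ X', G.IsClique X' → X ⊆ X' → X' = X

/-- `v` is a universal vertex of `G`: it is adjacent to every other vertex. -/
def UniversalVertex (G : SimpleGraph V) (v : V) : Prop := ∀ u, u ≠ v → G.Adj v u

/-- `v` is universal in the subgraph of `G` induced by a set `s` of vertices. -/
def UniversalIn (G : SimpleGraph V) (s : Set V) (v : V) : Prop :=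
  v ∈ s ∧ ∀ u ∈ s, u ≠ v → G.Adj v u

/-- The set of pendant (degree-one) vertices of `G`. -/
def pendants (G : SimpleGraph V) : Set V := {v | vdeg G v = 1}

/-- The matching number `α'(G)`: the maximum number of pairwise disjoint edges of `G`. -/
noncomputable def matchingNum (G : SimpleGraph V) : ℕ :=
  sSup {n | ∃ M : G.Subgraph, M.IsMatching ∧ M.edgeSet.ncard = n}


/-- Auxiliary: every degree is at most the maximum degree. -/
lemma vdeg_le_maxDeg [Fintype V] (G : SimpleGraph V) (w : V) : vdeg G w ≤ maxDeg G :=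
  le_csSup (Set.Finite.bddAbove (Set.finite_range _)) ⟨w, rfl⟩

/-- In a connected `(σ = 2)`-split graph with even maximum degree, if `v` is a vertex of
maximum degree whose closed neighborhood induces an overfull graph, then `v` has no
pendant neighbor. -/
theorem stmt8 [Fintype V] (G : SimpleGraph V) (X Y : Set V)
    (hsplit : IsSplitPartition G X Y) (hmax : IsMaximalClique G X)
    (hconn : G.Connected) (hsigma : stretchIndex G = 2) (heven : Even (maxDeg G))
    (v : V) (hv : vdeg G v = maxDeg G)
    (hover : IsOverfull (G.induce (closedNbhd G v))) :
    ∀ u, G.Adj v u → vdeg G u ≠ 1 := by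
  classical
  intro u hadj hu1
  set d := maxDeg G with hd
  set s := closedNbhd G v with hs
  set H := G.induce s with hH
  have hvs : v ∈ s := Set.mem_insert _ _
  have hus : u ∈ s := Set.mem_insert_of_mem _ hadj
  have hvnot : v ∉ G.neighborSet v := by simp
  have hNfin : (G.neighborSet v).Finite := Set.toFinite _
  -- neighborSet of u is {v}
  have huN : G.neighborSet u = {v} := by
    obtain ⟨a, ha⟩ := Set.ncard_eq_one.mp hu1
    have hvmem : v ∈ G.neighborSet u := hadj.symm
    rw [ha] at hvmem ⊢
    simp at hvmem; subst hvmem; rfl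
  -- card of s
  have hcards : Nat.card s = d + 1 := by
    rw [Nat.card_coe_set_eq, hs, closedNbhd, Set.ncard_insert_of_notMem hvnot hNfin]
    exact congrArg (· + 1) hv
  -- vdeg in H bounded by d
  have hHle : ∀ w : s, vdeg H w ≤ d := by
    intro w
    have himg : Subtype.val '' (H.neighborSet w) ⊆ G.neighborSet w.1 := by
      rintro x ⟨a, ha, rfl⟩; exact ha
    calc vdeg H w = (Subtype.val '' (H.neighborSet w)).ncard :=
          (Set.ncard_image_of_injective _ Subtype.val_injective).symm
      _ ≤ (G.neighborSet (w : V)).ncard := Set.ncard_le_ncard himg (Set.toFinite _)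
      _ ≤ d := vdeg_le_maxDeg G w.1
  -- vdeg of v in H equals d
  have hvH : vdeg H ⟨v, hvs⟩ = d := by
    have himg : Subtype.val '' (H.neighborSet ⟨v, hvs⟩) = G.neighborSet v := by
      ext x; constructor
      · rintro ⟨a, ha, rfl⟩; exact ha
      · intro hx
        exact ⟨⟨x, Set.mem_insert_of_mem _ hx⟩, hx, rfl⟩
    calc vdeg H ⟨v, hvs⟩ = (Subtype.val '' (H.neighborSet ⟨v, hvs⟩)).ncard :=
          (Set.ncard_image_of_injective _ Subtype.val_injective).symm
      _ = (G.neighborSet v).ncard := by rw [himg]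
      _ = d := hv
  -- vdeg of u in H equals 1
  have huH : vdeg H ⟨u, hus⟩ = 1 := by
    have himg : Subtype.val '' (H.neighborSet ⟨u, hus⟩) = {v} := by
      ext x; constructor
      · rintro ⟨a, ha, rfl⟩
        have : (a : V) ∈ G.neighborSet u := ha
        rwa [huN] at this
      · intro hx
        rw [Set.mem_singleton_iff] at hx
        refine ⟨⟨x, ?_⟩, ?_, rfl⟩
        · rw [hx]; exact hvs
        · show G.Adj u x
          rw [hx]; exact hadj.symm
    have := Set.ncard_image_of_injective (H.neighborSet ⟨u, hus⟩) Subtype.val_injective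
    rw [himg] at this
    simpa [vdeg] using this.symm
  -- maxDeg H = d
  have hmaxH : maxDeg H = d := by
    apply le_antisymm
    · haveI : Nonempty s := ⟨⟨v, hvs⟩⟩
      exact csSup_le (Set.range_nonempty _) (by rintro x ⟨w, rfl⟩; exact hHle w)
    · rw [← hvH]; exact vdeg_le_maxDeg H ⟨v, hvs⟩
  have hd2 : 2 ≤ d := by
    have h1 : 1 ≤ vdeg G v :=
      (Set.ncard_pos (Set.toFinite _)).mpr ⟨u, hadj⟩
    obtain ⟨k, hk⟩ := heven
    omega
  -- sum of degrees
  haveI : Fintype s := Fintype.ofFinite _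
  haveI : DecidableRel H.Adj := Classical.decRel _
  have hsum : ∑ w : s, H.degree w = 2 * H.edgeFinset.card :=
    SimpleGraph.sum_degrees_eq_twice_card_edges H
  have hdeg_eq : ∀ w : s, H.degree w = vdeg H w := by
    intro w
    rw [vdeg, Set.ncard_eq_toFinset_card']
    simp [SimpleGraph.degree, SimpleGraph.neighborFinset]
  have hedge : edgeCount H = H.edgeFinset.card := by
    rw [edgeCount, Set.ncard_eq_toFinset_card']
    exact congrArg Finset.card (by ext e; simp)
  -- bound sum
  have hcardV : Fintype.card s = d + 1 := by
    rw [← Nat.card_eq_fintype_card, hcards]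
  have hsum_le : ∑ w : s, H.degree w ≤ 1 + d * d := by
    rw [← Finset.add_sum_erase _ _ (Finset.mem_univ (⟨u, hus⟩ : s))]
    have h1 : H.degree ⟨u, hus⟩ = 1 := by rw [hdeg_eq]; exact huH
    have h2 : ∑ w ∈ Finset.univ.erase (⟨u, hus⟩ : s), H.degree w ≤ d * d := by
      calc ∑ w ∈ Finset.univ.erase (⟨u, hus⟩ : s), H.degree w
          ≤ (Finset.univ.erase (⟨u, hus⟩ : s)).card * d :=
            Finset.sum_le_card_nsmul _ _ d (fun w _ => by rw [hdeg_eq]; exact hHle w)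
        _ ≤ d * d := by
            rw [Finset.card_erase_of_mem (Finset.mem_univ _), Finset.card_univ, hcardV]
            simp
    omega
  -- overfull gives lower bound
  obtain ⟨k, hk⟩ := heven
  have hkd : d = 2 * k := by omega
  have hover' : edgeCount H > 2 * k * k := by
    have h0 : IsOverfull H := hover
    rw [IsOverfull, hmaxH, hcards, hkd] at h0
    have h2 : (2 * k + 1) / 2 = k := by omega
    rwa [h2] at h0
  rw [hedge] at hover'
  rw [hsum] at hsum_le
  rw [hkd] at hsum_le
  nlinarith
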